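/- arXiv:2009.03747 — 2 statements merged into one kernel-verified Lean document; each statement's English description precedes it below -/
import Mathlib

section
/- Havel–Hakimi theorem: Let d_1 ≥ d_2 ≥ ... ≥ d_n be nonnegative integers with d_1 = Δ ≤ n − 1. Then (d_1,...,d_n) is graphical if and only if the sequence (d_2 − 1, d_3 − 1, ..., d_{Δ+1} − 1, d_{Δ+2}, ..., d_n) is graphical. -/
/-- A sequence of integers is graphical if some finite simple graph realizes
it as its degree sequence (in particular all entries are nonnegative). -/
def GraphicalZ {m : ℕ} (d : Fin m → ℤ) : Prop :=
  ∃ G : SimpleGraph (Fin m), ∀ v, ((G.neighborSet v).ncard : ℤ) = d v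

/-!
Among the realizations of `d`, take one in which vertex `0` has as few neighbours as possible
outside `T = {1, …, Δ}`, the `Δ` vertices of largest degree. If `0 ~ v` with `v ∉ T` and
`0 ≁ u` with `u ∈ T`, then `deg v ≤ deg u` and `0 ∈ N(v) \ N(u)` force a neighbour `w` of `u`
that is not adjacent to `v`, and the 2-switch replacing the edges `0v, uw` by `0u, vw` keeps
every degree while moving a neighbour of `0` into `T`. Hence some realization has `N(0) = T`,
and deleting vertex `0` from it leaves a realization of the reduced sequence. Conversely, a new
vertex joined to `1, …, Δ` turns a realization of the reduced sequence into one of `d`.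
-/

open Set

namespace SimpleGraph

section TwoSwitch

variable {V : Type*} (G : SimpleGraph V)

def twoSwitch (a b c e : V) : SimpleGraph V :=
  fromEdgeSet (G.edgeSet \ {s(a, b), s(c, e)} ∪ {s(a, c), s(b, e)})

variable {G} {a b c e : V}

lemma twoSwitch_swap (a b c e : V) : G.twoSwitch a b c e = G.twoSwitch b a e c := by
  ext x y
  simp only [twoSwitch, fromEdgeSet_adj, mem_union, mem_sdiff, mem_insert_iff, mem_singleton_iff,
    Sym2.eq_swap]
  tauto

lemma twoSwitch_comm (a b c e : V) : G.twoSwitch a b c e = G.twoSwitch c e a b := by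
  ext x y
  simp only [twoSwitch, fromEdgeSet_adj, mem_union, mem_sdiff, mem_insert_iff, mem_singleton_iff,
    Sym2.eq_swap]
  tauto

lemma neighborSet_twoSwitch_of_ne {x : V} (ha : x ≠ a) (hb : x ≠ b) (hc : x ≠ c)
    (he : x ≠ e) :
    (G.twoSwitch a b c e).neighborSet x = G.neighborSet x := by
  ext y
  simp only [twoSwitch, mem_neighborSet, fromEdgeSet_adj, mem_union, mem_sdiff, mem_edgeSet,
    mem_insert_iff, mem_singleton_iff, Sym2.eq_iff]
  have := G.ne_of_adj (a := x) (b := y)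
  grind

lemma neighborSet_twoSwitch_left (hab : G.Adj a b) (hac : a ≠ c) (hae : a ≠ e) :
    (G.twoSwitch a b c e).neighborSet a = insert c (G.neighborSet a \ {b}) := by
  ext y
  simp only [twoSwitch, mem_neighborSet, fromEdgeSet_adj, mem_union, mem_sdiff, mem_edgeSet,
    mem_insert_iff, mem_singleton_iff, Sym2.eq_iff]
  have := G.ne_of_adj (a := a) (b := y)
  have := hab.ne
  grind

lemma ncard_neighborSet_twoSwitch (hab : G.Adj a b) (hce : G.Adj c e) (hac : ¬G.Adj a c)
    (hbe : ¬G.Adj b e) (hac' : a ≠ c) (hbe' : b ≠ e) (hae : a ≠ e) (hbc : b ≠ c) (x : V) :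
    ((G.twoSwitch a b c e).neighborSet x).ncard = (G.neighborSet x).ncard := by
  by_cases hxa : x = a
  · subst hxa
    rw [neighborSet_twoSwitch_left hab hac' hae]
    exact ncard_exchange hac hab
  by_cases hxb : x = b
  · subst hxb
    rw [twoSwitch_swap, neighborSet_twoSwitch_left hab.symm hbe' hbc]
    exact ncard_exchange hbe hab.symm
  by_cases hxc : x = c
  · subst hxc
    rw [twoSwitch_comm, neighborSet_twoSwitch_left hce hac'.symm hbc.symm]
    exact ncard_exchange (fun h ↦ hac h.symm) hce
  by_cases hxe : x = e
  · subst hxe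
    rw [twoSwitch_comm, twoSwitch_swap,
      neighborSet_twoSwitch_left hce.symm hbe'.symm hae.symm]
    exact ncard_exchange (fun h ↦ hbe h.symm) hce.symm
  rw [neighborSet_twoSwitch_of_ne hxa hxb hxc hxe]

variable [Finite V]

lemma exists_adj_not_adj_of_ncard_le {x u v : V} (hxv : G.Adj x v) (hxu : ¬G.Adj x u)
    (hux : u ≠ x) (hdeg : (G.neighborSet v).ncard ≤ (G.neighborSet u).ncard) :
    ∃ w, G.Adj u w ∧ ¬G.Adj v w ∧ w ≠ v := by
  by_contra! h
  have hsub : G.neighborSet u \ {v} ⊂ G.neighborSet v \ {u} := by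
    refine (ssubset_iff_of_subset ?_).mpr
      ⟨x, ⟨hxv.symm, hux.symm⟩, fun hx ↦ hxu hx.1.symm⟩
    rintro w ⟨huw, hwv⟩
    exact ⟨by_contra fun hvw ↦ hwv (h w huw hvw), (G.ne_of_adj huw).symm⟩
  have hlt := ncard_lt_ncard hsub
  by_cases huv : G.Adj u v
  · have := ncard_sdiff_singleton_add_one (s := G.neighborSet u) huv
    have := ncard_sdiff_singleton_add_one (s := G.neighborSet v) huv.symm
    omega
  · rw [sdiff_singleton_eq_self (show v ∉ G.neighborSet u from huv),
      sdiff_singleton_eq_self (show u ∉ G.neighborSet v from fun h ↦ huv h.symm)] at hlt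
    omega

lemma exists_neighborSet_eq_insert_sdiff {d : V → ℕ} (hG : ∀ y, (G.neighborSet y).ncard = d y)
    {x u v : V} (hxv : G.Adj x v) (hxu : ¬G.Adj x u) (hux : u ≠ x) (huv : u ≠ v)
    (hdeg : d v ≤ d u) :
    ∃ H : SimpleGraph V, (∀ y, (H.neighborSet y).ncard = d y) ∧
      H.neighborSet x = insert u (G.neighborSet x \ {v}) := by
  obtain ⟨w, huw, hvw, hwv⟩ := exists_adj_not_adj_of_ncard_le hxv hxu hux (by rwa [hG, hG])
  have hxw : x ≠ w := by rintro rfl; exact hxu huw.symm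
  refine ⟨G.twoSwitch x v u w, fun y ↦ ?_, neighborSet_twoSwitch_left hxv hux.symm hxw⟩
  rw [ncard_neighborSet_twoSwitch hxv huw hxu hvw hux.symm hwv.symm hxw huv.symm, hG]

theorem exists_neighborSet_eq_of_forall_le {d : V → ℕ}
    (hG : ∀ y, (G.neighborSet y).ncard = d y) {x : V} {T : Set V} (hxT : x ∉ T)
    (hT : T.ncard = d x) (hmax : ∀ u ∈ T, ∀ v ∉ T, v ≠ x → d v ≤ d u) :
    ∃ H : SimpleGraph V, (∀ y, (H.neighborSet y).ncard = d y) ∧ H.neighborSet x = T := by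
  obtain ⟨k, hk⟩ : ∃ k, (G.neighborSet x \ T).ncard = k := ⟨_, rfl⟩
  induction k generalizing G with
  | zero =>
    have hsub : G.neighborSet x ⊆ T := sdiff_eq_empty.mp ((ncard_eq_zero).1 hk)
    exact ⟨G, hG, eq_of_subset_of_ncard_le hsub (by rw [hT, hG])⟩
  | succ k ih =>
    obtain ⟨v, hvN, hvT⟩ : (G.neighborSet x \ T).Nonempty :=
      nonempty_of_ncard_ne_zero (by omega)
    obtain ⟨u, huT, huN⟩ : (T \ G.neighborSet x).Nonempty := by
      rw [nonempty_iff_ne_empty, Ne, sdiff_eq_empty]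
      intro hsub
      exact hvT (eq_of_subset_of_ncard_le hsub (by rw [hT, hG]) ▸ hvN)
    obtain ⟨H, hH, hHx⟩ := exists_neighborSet_eq_insert_sdiff hG hvN huN
      (ne_of_mem_of_not_mem huT hxT) (ne_of_mem_of_not_mem huT hvT)
      (hmax u huT v hvT (G.ne_of_adj hvN).symm)
    refine ih hH ?_
    rw [hHx, insert_sdiff_of_mem _ huT, sdiff_right_comm,
      ncard_sdiff_singleton_of_mem (show v ∈ G.neighborSet x \ T from ⟨hvN, hvT⟩),
      hk, Nat.add_sub_cancel]

end TwoSwitch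

section AddVertex

variable {n : ℕ} (G : SimpleGraph (Fin n)) (S : Set (Fin n))

def addVertex : SimpleGraph (Fin (n + 1)) where
  Adj x y := Fin.cases (Fin.cases False (· ∈ S) y) (fun i ↦ Fin.cases (i ∈ S) (G.Adj i) y) x
  symm := ⟨fun x y ↦ by
    cases x using Fin.cases <;> cases y using Fin.cases <;> simp [G.adj_comm]⟩
  loopless := ⟨fun x ↦ by cases x using Fin.cases <;> simp⟩

variable {G S}

@[simp] lemma addVertex_adj_zero_succ {i : Fin n} : (G.addVertex S).Adj 0 i.succ ↔ i ∈ S :=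
  Iff.rfl

@[simp] lemma addVertex_adj_succ_zero {i : Fin n} : (G.addVertex S).Adj i.succ 0 ↔ i ∈ S :=
  Iff.rfl

@[simp] lemma addVertex_adj_succ_succ {i j : Fin n} :
    (G.addVertex S).Adj i.succ j.succ ↔ G.Adj i j := Iff.rfl

lemma neighborSet_addVertex_zero : (G.addVertex S).neighborSet 0 = Fin.succ '' S := by
  ext y
  cases y using Fin.cases <;> simp

lemma neighborSet_addVertex_succ_sdiff_zero (i : Fin n) :
    (G.addVertex S).neighborSet i.succ \ {0} = Fin.succ '' G.neighborSet i := by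
  ext y
  cases y using Fin.cases <;> simp

lemma ncard_neighborSet_addVertex_succ_of_mem {i : Fin n} (hi : i ∈ S) :
    ((G.addVertex S).neighborSet i.succ).ncard = (G.neighborSet i).ncard + 1 := by
  rw [← ncard_sdiff_singleton_add_one (show 0 ∈ (G.addVertex S).neighborSet i.succ from hi),
    neighborSet_addVertex_succ_sdiff_zero, ncard_image_of_injective _ (Fin.succ_injective n)]

lemma ncard_neighborSet_addVertex_succ_of_notMem {i : Fin n} (hi : i ∉ S) :
    ((G.addVertex S).neighborSet i.succ).ncard = (G.neighborSet i).ncard := by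
  rw [← sdiff_singleton_eq_self (show 0 ∉ (G.addVertex S).neighborSet i.succ from hi),
    neighborSet_addVertex_succ_sdiff_zero, ncard_image_of_injective _ (Fin.succ_injective n)]

lemma exists_addVertex_eq {H : SimpleGraph (Fin (n + 1))} (hH : H.neighborSet 0 = Fin.succ '' S) :
    ∃ G : SimpleGraph (Fin n), G.addVertex S = H := by
  refine ⟨H.comap Fin.succ, ?_⟩
  ext x y
  have h0 (i : Fin n) : H.Adj 0 i.succ ↔ i ∈ S := by
    rw [← mem_neighborSet, hH, (Fin.succ_injective n).mem_set_image]
  cases x using Fin.cases <;> cases y using Fin.cases <;> simp [h0, H.adj_comm _ 0]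

end AddVertex

end SimpleGraph

lemma Fin.ncard_setOf_intCast_lt {n : ℕ} {k : ℤ} (h0 : 0 ≤ k) (hk : k ≤ n) :
    ({i : Fin n | ((i : ℕ) : ℤ) < k}.ncard : ℤ) = k := by
  have hS : {i : Fin n | ((i : ℕ) : ℤ) < k} =
      ↑(Finset.univ.filter fun i : Fin n ↦ ↑i < k.toNat) := by
    ext i
    simp only [mem_ofPred_eq, Finset.coe_filter, Finset.mem_univ, true_and]
    omega
  rw [hS, ncard_coe_finset, Fin.card_filter_val_lt]
  omega

open SimpleGraph in
theorem graphicalZ_iff_exists_neighborSet_zero_eq {n : ℕ} {d : Fin (n + 1) → ℤ}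
    {r : Fin n → ℤ} {S : Set (Fin n)} (hS0 : (S.ncard : ℤ) = d 0)
    (hS : ∀ i ∈ S, r i = d i.succ - 1) (hSc : ∀ i ∉ S, r i = d i.succ) :
    GraphicalZ r ↔ ∃ H : SimpleGraph (Fin (n + 1)),
      (∀ v, ((H.neighborSet v).ncard : ℤ) = d v) ∧ H.neighborSet 0 = Fin.succ '' S := by
  constructor
  · rintro ⟨G, hG⟩
    refine ⟨G.addVertex S, Fin.cases ?_ fun i ↦ ?_, neighborSet_addVertex_zero⟩
    · rw [neighborSet_addVertex_zero, ncard_image_of_injective _ (Fin.succ_injective n), hS0]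
    · by_cases hi : i ∈ S
      · rw [ncard_neighborSet_addVertex_succ_of_mem hi, Nat.cast_succ, hG, hS i hi, sub_add_cancel]
      · rw [ncard_neighborSet_addVertex_succ_of_notMem hi, hG, hSc i hi]
  · rintro ⟨H, hH, hH0⟩
    obtain ⟨G, rfl⟩ := exists_addVertex_eq hH0
    refine ⟨G, fun i ↦ ?_⟩
    by_cases hi : i ∈ S
    · rw [hS i hi, ← hH, ncard_neighborSet_addVertex_succ_of_mem hi, Nat.cast_succ,
        add_sub_cancel_right]
    · rw [hSc i hi, ← hH, ncard_neighborSet_addVertex_succ_of_notMem hi]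

/-- Havel–Hakimi theorem: for `d 0 = Δ ≥ d 1 ≥ ... ≥ d n` with `Δ ≤ n`,
the sequence `d` is graphical iff the sequence obtained by deleting `d 0` and
decrementing the next `Δ` entries is graphical. -/
theorem stmt6 {n : ℕ} (d : Fin (n + 1) → ℤ) (hnn : ∀ i, 0 ≤ d i)
    (hsort : ∀ i j : Fin (n + 1), i ≤ j → d j ≤ d i)
    (hΔ : d 0 ≤ (n : ℤ)) :
    GraphicalZ d ↔
      GraphicalZ (fun i : Fin n =>
        if ((i : ℕ) : ℤ) < d 0 then d i.succ - 1 else d i.succ) := by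
  set S : Set (Fin n) := {i | ((i : ℕ) : ℤ) < d 0}
  have hS0 : (S.ncard : ℤ) = d 0 := Fin.ncard_setOf_intCast_lt (hnn 0) hΔ
  refine Iff.trans ?_ (graphicalZ_iff_exists_neighborSet_zero_eq hS0
    (fun i hi ↦ if_pos hi) (fun i hi ↦ if_neg hi)).symm
  refine ⟨fun ⟨G, hG⟩ ↦ ?_, fun ⟨H, hH, _⟩ ↦ ⟨H, hH⟩⟩
  have hmax : ∀ u ∈ Fin.succ '' S, ∀ v ∉ Fin.succ '' S, v ≠ 0 →
      (G.neighborSet v).ncard ≤ (G.neighborSet u).ncard := by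
    rintro _ ⟨i, hi, rfl⟩ v hv hv0
    obtain ⟨j, rfl⟩ := Fin.exists_succ_eq.mpr hv0
    have hj : j ∉ S := fun hj ↦ hv ⟨j, hj, rfl⟩
    have hij : i.succ ≤ j.succ := by
      simp only [S, mem_ofPred_eq] at hi hj
      rw [Fin.succ_le_succ_iff, Fin.le_iff_val_le_val]
      omega
    have := hsort _ _ hij
    rw [← hG, ← hG] at this
    exact_mod_cast this
  have hT : (Fin.succ '' S).ncard = (G.neighborSet 0).ncard := by
    rw [ncard_image_of_injective _ (Fin.succ_injective n)]
    exact_mod_cast hS0.trans (hG 0).symm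
  obtain ⟨H, hH, hH0⟩ :=
    G.exists_neighborSet_eq_of_forall_le (fun _ ↦ rfl) (by simp [Fin.succ_ne_zero]) hT hmax
  exact ⟨H, fun v ↦ by rw [hH, hG], hH0⟩
end

section
/- Supernode potential connectedness: Let (d_1,...,d_n) be a graphical degree sequence and let the vertices be partitioned into N blocks ('supernodes') with block degree sums D_1,...,D_N. If D_i ≥ 1 for all i (or N = 1) and (1/2)·Σ_i D_i ≥ N − 1, then there exists a simple graph realization of (d_1,...,d_n) in which contracting each block to a single node yields a connected graph. -/
/-!
Choose a realization `G` of `d` whose block contraction has as few components as possible and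
suppose it is disconnected. If every edge `ab` of `G` were essential, i.e. `P a` and `P b` were
disconnected in the contraction of `G - ab`, the contraction would be a forest with as many
edges as `G`; by the degree sum these are at least `N - 1`, so the forest would be connected.
Hence some edge `ab` is inessential. As every block has positive degree, a block outside the
component of `P a` carries an edge `xy`, and the double edge swap `ab, xy ↦ ax, by` preserves all
degrees, keeps every connection of the contraction (`P a, P b` stay joined by the detour avoiding
`ab`) and joins two components, contradicting minimality.
-/

def Graphical {m : ℕ} (d : Fin m → ℕ) : Prop :=
  ∃ G : SimpleGraph (Fin m), ∀ v, (G.neighborSet v).ncard = d v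

namespace SimpleGraph

variable {V β : Type*}

lemma IsAcyclic.connected_of_card_le [Finite V] [Nonempty V] {G : SimpleGraph V}
    (hG : G.IsAcyclic) (hcard : Nat.card V ≤ Nat.card G.edgeSet + 1) : G.Connected := by
  obtain ⟨T, hGT, -, hT⟩ := connected_top.exists_isTree_le_of_le_of_isAcyclic le_top hG
  have hT_card := (isTree_iff_connected_and_card.mp hT).2
  have : G.edgeSet = T.edgeSet := by
    refine Set.eq_of_subset_of_ncard_le (edgeSet_mono hGT) ?_ (Set.toFinite _)
    simp only [← Nat.card_coe_set_eq]
    omega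
  rw [edgeSet_injective this]
  exact hT.connected

lemma reachable_of_forall_adj_reachable {G H : SimpleGraph V}
    (h : ∀ u v, G.Adj u v → H.Reachable u v) {u v : V} (huv : G.Reachable u v) :
    H.Reachable u v := by
  rw [reachable_iff_reflTransGen] at huv ⊢
  exact Relation.reflTransGen_closed
    (fun u v huv => (reachable_iff_reflTransGen u v).mp (h u v huv)) _ _ huv

lemma card_connectedComponent_lt_of_reachable_imp [Finite V] {G H : SimpleGraph V}
    (h : ∀ {u v}, G.Reachable u v → H.Reachable u v) {u v : V} (hH : H.Reachable u v)
    (hG : ¬G.Reachable u v) : Nat.card H.ConnectedComponent < Nat.card G.ConnectedComponent := by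
  have := Fintype.ofFinite G.ConnectedComponent
  have := Fintype.ofFinite H.ConnectedComponent
  let φ : G.ConnectedComponent → H.ConnectedComponent :=
    ConnectedComponent.lift H.connectedComponentMk fun u v p _ =>
      ConnectedComponent.sound (h p.reachable)
  have hφ : Function.Surjective φ :=
    ConnectedComponent.ind fun v => ⟨G.connectedComponentMk v, rfl⟩
  have hφ' : ¬Function.Injective φ := fun hinj =>
    hG (ConnectedComponent.eq.mp (hinj (ConnectedComponent.sound hH)))
  simpa only [Nat.card_eq_fintype_card] using
    Fintype.card_lt_of_surjective_not_injective φ hφ hφ'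

lemma sum_ncard_neighborSet [Fintype V] (G : SimpleGraph V) :
    ∑ v, (G.neighborSet v).ncard = 2 * Nat.card G.edgeSet := by
  classical
  simp only [Set.ncard_eq_toFinset_card', Nat.card_eq_fintype_card, ← edgeFinset_card]
  exact sum_degrees_eq_twice_card_edges G

/-- Contraction of every fibre of `P` to a single vertex; edges inside a fibre are dropped. -/
def contract (P : V → β) (G : SimpleGraph V) : SimpleGraph β :=
  fromEdgeSet (Sym2.map P '' G.edgeSet)

section contract

variable {P : V → β} {G G' : SimpleGraph V}

lemma contract_mono (h : G ≤ G') : contract P G ≤ contract P G' :=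
  fromEdgeSet_mono (Set.image_mono (edgeSet_mono h))

lemma contract_adj_of_adj {u v : V} (h : G.Adj u v) (hP : P u ≠ P v) :
    (contract P G).Adj (P u) (P v) :=
  ⟨⟨s(u, v), h, rfl⟩, hP⟩

lemma reachable_contract_of_adj {u v : V} (h : G.Adj u v) :
    (contract P G).Reachable (P u) (P v) := by
  by_cases hP : P u = P v
  · rw [hP]
  · exact (contract_adj_of_adj h hP).reachable

lemma exists_adj_of_contract_adj {p q : β} (h : (contract P G).Adj p q) :
    ∃ u v, G.Adj u v ∧ P u = p ∧ P v = q := by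
  obtain ⟨⟨e, he, hmap⟩, -⟩ := h
  induction e using Sym2.ind with
  | _ u v =>
    rw [Sym2.map_mk, Sym2.eq_iff] at hmap
    rcases hmap with ⟨rfl, rfl⟩ | ⟨rfl, rfl⟩
    exacts [⟨u, v, he, rfl, rfl⟩, ⟨v, u, he.symm, rfl, rfl⟩]

lemma fromRel_eq_contract (P : V → β) (G : SimpleGraph V) :
    fromRel (fun p q => ∃ u v, P u = p ∧ P v = q ∧ G.Adj u v) = contract P G := by
  ext p q
  refine ⟨fun h => ?_, fun h => ?_⟩
  · obtain ⟨hne, ⟨u, v, rfl, rfl, huv⟩ | ⟨u, v, rfl, rfl, huv⟩⟩ := h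
    exacts [contract_adj_of_adj huv hne, (contract_adj_of_adj huv hne.symm).symm]
  · obtain ⟨u, v, huv, rfl, rfl⟩ := exists_adj_of_contract_adj h
    exact (fromRel_adj _ _ _).mpr ⟨h.ne, .inl ⟨u, v, rfl, rfl, huv⟩⟩

lemma reachable_contract_of_forall_adj
    (h : ∀ u v, G.Adj u v → (contract P G').Reachable (P u) (P v)) {p q : β}
    (hpq : (contract P G).Reachable p q) : (contract P G').Reachable p q := by
  refine reachable_of_forall_adj_reachable (fun p q hpq => ?_) hpq
  obtain ⟨u, v, huv, rfl, rfl⟩ := exists_adj_of_contract_adj hpq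
  exact h u v huv

lemma deleteEdges_contract_le (e : Sym2 V) :
    (contract P G).deleteEdges {Sym2.map P e} ≤ contract P (G.deleteEdges {e}) := by
  intro p q
  simp only [deleteEdges_adj, contract, fromEdgeSet_adj, edgeSet_deleteEdges,
    Set.mem_singleton_iff]
  rintro ⟨⟨⟨e', he', hmap⟩, hne⟩, hne'⟩
  refine ⟨⟨e', ⟨he', ?_⟩, hmap⟩, hne⟩
  rintro rfl
  exact hne' hmap.symm

lemma isBridge_contract_of_not_reachable {a b : V}
    (h : ¬(contract P (G.deleteEdges {s(a, b)})).Reachable (P a) (P b)) :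
    (contract P G).IsBridge s(P a, P b) := fun h' =>
  h (h'.mono (Sym2.map_mk P a b ▸ deleteEdges_contract_le s(a, b)))

def AllEdgesEssential (P : V → β) (G : SimpleGraph V) : Prop :=
  ∀ a b, G.Adj a b → ¬(contract P (G.deleteEdges {s(a, b)})).Reachable (P a) (P b)

lemma AllEdgesEssential.ne {a b : V} (h : AllEdgesEssential P G) (hab : G.Adj a b) :
    P a ≠ P b := fun hP => h a b hab (hP ▸ Reachable.rfl)

lemma AllEdgesEssential.injOn (h : AllEdgesEssential P G) :
    Set.InjOn (Sym2.map P) G.edgeSet := by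
  intro e₁ he₁ e₂ he₂ heq
  by_contra hne
  induction e₁ using Sym2.ind with
  | _ a b =>
    refine h a b he₁ (Adj.reachable ⟨⟨e₂, ?_, heq.symm⟩, h.ne he₁⟩)
    rw [edgeSet_deleteEdges]
    exact ⟨he₂, Ne.symm hne⟩

lemma AllEdgesEssential.isAcyclic (h : AllEdgesEssential P G) : (contract P G).IsAcyclic := by
  rw [isAcyclic_iff_forall_isBridge]
  intro e he
  rw [contract, edgeSet_fromEdgeSet] at he
  obtain ⟨⟨e', he', rfl⟩, -⟩ := he
  induction e' using Sym2.ind with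
  | _ a b => exact isBridge_contract_of_not_reachable (h a b he')

lemma AllEdgesEssential.card_edgeSet (h : AllEdgesEssential P G) :
    Nat.card (contract P G).edgeSet = Nat.card G.edgeSet := by
  rw [contract, edgeSet_fromEdgeSet, sdiff_eq_left.mpr, Nat.card_coe_set_eq,
    h.injOn.ncard_image, Nat.card_coe_set_eq]
  rw [Set.disjoint_left]
  rintro _ ⟨e, he, rfl⟩ hdiag
  induction e using Sym2.ind with
  | _ a b => exact h.ne he (by simpa using hdiag)

theorem exists_adj_reachable_contract_deleteEdges [Finite β] [Nonempty β]
    (hcard : Nat.card β ≤ Nat.card G.edgeSet + 1) (hconn : ¬(contract P G).Connected) :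
    ∃ a b, G.Adj a b ∧ (contract P (G.deleteEdges {s(a, b)})).Reachable (P a) (P b) := by
  by_contra! h
  have h : AllEdgesEssential P G := h
  exact hconn (h.isAcyclic.connected_of_card_le (h.card_edgeSet ▸ hcard))

end contract

def edgeSwap (G : SimpleGraph V) (a b x y : V) : SimpleGraph V :=
  G.deleteEdges {s(a, b), s(x, y)} ⊔ edge a x ⊔ edge b y

section edgeSwap

variable {G : SimpleGraph V} {a b x y : V}

lemma edgeSwap_adj {u v : V} : (G.edgeSwap a b x y).Adj u v ↔
    (G.Adj u v ∧ s(u, v) ≠ s(a, b) ∧ s(u, v) ≠ s(x, y)) ∨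
      ((s(u, v) = s(a, x) ∨ s(u, v) = s(b, y)) ∧ u ≠ v) := by
  simp only [edgeSwap, sup_adj, deleteEdges_adj, Set.mem_insert_iff, Set.mem_singleton_iff,
    adj_edge]
  grind

lemma edgeSwap_swap_left : G.edgeSwap a b x y = G.edgeSwap b a y x := by
  ext u v
  simp only [edgeSwap_adj, Sym2.eq_swap (a := b) (b := a), Sym2.eq_swap (a := y) (b := x),
    Sym2.eq_swap (a := b) (b := y), Sym2.eq_swap (a := a) (b := x)]
  tauto

lemma edgeSwap_swap_pairs : G.edgeSwap a b x y = G.edgeSwap x y a b := by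
  ext u v
  simp only [edgeSwap_adj, Sym2.eq_swap (a := x) (b := a), Sym2.eq_swap (a := y) (b := b)]
  tauto

lemma neighborSet_edgeSwap_left (hab : a ≠ b) (hax : a ≠ x) (hay : a ≠ y) :
    (G.edgeSwap a b x y).neighborSet a = insert x (G.neighborSet a \ {b}) := by
  ext w
  simp only [mem_neighborSet, edgeSwap_adj, Set.mem_insert_iff, Set.mem_sdiff,
    Set.mem_singleton_iff, Sym2.eq_iff]
  aesop

lemma neighborSet_edgeSwap_of_ne {v : V} (ha : v ≠ a) (hb : v ≠ b) (hx : v ≠ x)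
    (hy : v ≠ y) :
    (G.edgeSwap a b x y).neighborSet v = G.neighborSet v := by
  ext w
  simp only [mem_neighborSet, edgeSwap_adj, Sym2.eq_iff]
  aesop

lemma ncard_neighborSet_edgeSwap (hab : G.Adj a b) (hxy : G.Adj x y) (hax : ¬G.Adj a x)
    (hby : ¬G.Adj b y) (hax' : a ≠ x) (hay : a ≠ y) (hbx : b ≠ x) (hby' : b ≠ y) (v : V) :
    ((G.edgeSwap a b x y).neighborSet v).ncard = (G.neighborSet v).ncard := by
  by_cases hva : v = a
  · rw [hva, neighborSet_edgeSwap_left hab.ne hax' hay]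
    exact Set.ncard_exchange hax hab
  by_cases hvb : v = b
  · rw [hvb, edgeSwap_swap_left, neighborSet_edgeSwap_left hab.ne.symm hby' hbx]
    exact Set.ncard_exchange hby hab.symm
  by_cases hvx : v = x
  · rw [hvx, edgeSwap_swap_pairs, neighborSet_edgeSwap_left hxy.ne hax'.symm hbx.symm]
    exact Set.ncard_exchange (fun h => hax h.symm) hxy
  by_cases hvy : v = y
  · rw [hvy, edgeSwap_swap_pairs, edgeSwap_swap_left,
      neighborSet_edgeSwap_left hxy.ne.symm hby'.symm hay.symm]
    exact Set.ncard_exchange (fun h => hby h.symm) hxy.symm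
  rw [neighborSet_edgeSwap_of_ne hva hvb hvx hvy]

end edgeSwap

section swapStep

variable {P : V → β} {G : SimpleGraph V} {a b x y : V}

lemma reachable_contract_edgeSwap
    (hreach : (contract P (G.deleteEdges {s(a, b)})).Reachable (P a) (P b))
    (hax : ¬(contract P G).Reachable (P a) (P x)) :
    (contract P (G.edgeSwap a b x y)).Reachable (P a) (P b) := by
  classical
  obtain ⟨w⟩ := hreach
  -- `w` stays in the component of `P a`, so it never uses the block edge of `xy`
  have hxy : s(P x, P y) ∉ w.edges := fun he =>
    hax ((w.takeUntil _ (w.fst_mem_support_of_mem_edges he)).reachable.mono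
      (contract_mono (deleteEdges_le _)))
  refine (w.toDeleteEdge _ hxy).reachable.mono ?_
  calc _ ≤ contract P ((G.deleteEdges {s(a, b)}).deleteEdges {s(x, y)}) :=
        Sym2.map_mk P x y ▸ deleteEdges_contract_le _
    _ ≤ contract P (G.edgeSwap a b x y) := by
        refine contract_mono ?_
        rw [deleteEdges_deleteEdges, Set.singleton_union]
        exact le_sup_left.trans le_sup_left

lemma card_connectedComponent_contract_edgeSwap_lt [Finite β] (hab : G.Adj a b)
    (hreach : (contract P (G.deleteEdges {s(a, b)})).Reachable (P a) (P b)) (hxy : G.Adj x y)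
    (hax : ¬(contract P G).Reachable (P a) (P x)) :
    Nat.card (contract P (G.edgeSwap a b x y)).ConnectedComponent <
      Nat.card (contract P G).ConnectedComponent := by
  have hGab := hreach.mono (contract_mono (deleteEdges_le _))
  have hGxy := reachable_contract_of_adj (P := P) hxy
  have hPax : P a ≠ P x := fun h => hax (h ▸ Reachable.rfl)
  have hPby : P b ≠ P y := fun h => hax (hGab.trans (h ▸ hGxy.symm))
  have hab' := reachable_contract_edgeSwap (y := y) hreach hax
  have hax' : (contract P (G.edgeSwap a b x y)).Adj (P a) (P x) :=
    contract_adj_of_adj (edgeSwap_adj.mpr (.inr ⟨.inl rfl, fun h => hPax (congrArg P h)⟩)) hPax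
  have hby' : (contract P (G.edgeSwap a b x y)).Adj (P b) (P y) :=
    contract_adj_of_adj (edgeSwap_adj.mpr (.inr ⟨.inr rfl, fun h => hPby (congrArg P h)⟩)) hPby
  refine card_connectedComponent_lt_of_reachable_imp
    (reachable_contract_of_forall_adj fun u v huv => ?_) hax'.reachable hax
  by_cases h₁ : s(u, v) = s(a, b)
  · rcases Sym2.eq_iff.mp h₁ with ⟨rfl, rfl⟩ | ⟨rfl, rfl⟩
    exacts [hab', hab'.symm]
  by_cases h₂ : s(u, v) = s(x, y)
  · have hxy' := hax'.reachable.symm.trans (hab'.trans hby'.reachable)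
    rcases Sym2.eq_iff.mp h₂ with ⟨rfl, rfl⟩ | ⟨rfl, rfl⟩
    exacts [hxy', hxy'.symm]
  exact reachable_contract_of_adj (edgeSwap_adj.mpr (.inl ⟨huv, h₁, h₂⟩))

lemma ncard_neighborSet_edgeSwap_of_not_reachable (hab : G.Adj a b)
    (hreach : (contract P (G.deleteEdges {s(a, b)})).Reachable (P a) (P b)) (hxy : G.Adj x y)
    (hax : ¬(contract P G).Reachable (P a) (P x)) (v : V) :
    ((G.edgeSwap a b x y).neighborSet v).ncard = (G.neighborSet v).ncard := by
  have hGab := hreach.mono (contract_mono (deleteEdges_le _))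
  have hGxy := reachable_contract_of_adj (P := P) hxy
  have hsep : ∀ u w, (contract P G).Reachable (P a) (P u) →
      (contract P G).Reachable (P x) (P w) → u ≠ w ∧ ¬G.Adj u w := fun u w hu hw =>
    ⟨fun h => hax (hu.trans (h ▸ hw.symm)),
      fun h => hax (hu.trans ((reachable_contract_of_adj h).trans hw.symm))⟩
  exact ncard_neighborSet_edgeSwap hab hxy (hsep a x .rfl .rfl).2 (hsep b y hGab hGxy).2
    (hsep a x .rfl .rfl).1 (hsep a y .rfl hGxy).1 (hsep b x hGab .rfl).1 (hsep b y hGab hGxy).1 v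

theorem exists_ncard_neighborSet_eq_card_connectedComponent_contract_lt [Finite β]
    [Nonempty β] (hcard : Nat.card β ≤ Nat.card G.edgeSet + 1)
    (hconn : ¬(contract P G).Connected) (hblock : ∀ p, ∃ x y, P x = p ∧ G.Adj x y) :
    ∃ G' : SimpleGraph V, (∀ v, (G'.neighborSet v).ncard = (G.neighborSet v).ncard) ∧
      Nat.card (contract P G').ConnectedComponent <
        Nat.card (contract P G).ConnectedComponent := by
  obtain ⟨a, b, hab, hreach⟩ := exists_adj_reachable_contract_deleteEdges hcard hconn
  obtain ⟨p, hp⟩ : ∃ p, ¬(contract P G).Reachable (P a) p := by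
    by_contra! h
    exact hconn ((connected_iff_exists_forall_reachable _).mpr ⟨P a, h⟩)
  obtain ⟨x, y, rfl, hxy⟩ := hblock p
  exact ⟨G.edgeSwap a b x y, ncard_neighborSet_edgeSwap_of_not_reachable hab hreach hxy hp,
    card_connectedComponent_contract_edgeSwap_lt hab hreach hxy hp⟩

theorem exists_ncard_neighborSet_eq_connected_contract [Fintype V] [Finite β] [Nonempty β]
    (G₀ : SimpleGraph V) (hsum : 2 * (Nat.card β - 1) ≤ ∑ v, (G₀.neighborSet v).ncard)
    (hblock : ∀ p, ∃ x, P x = p ∧ (G₀.neighborSet x).ncard ≠ 0) :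
    ∃ G : SimpleGraph V, (∀ v, (G.neighborSet v).ncard = (G₀.neighborSet v).ncard) ∧
      (contract P G).Connected := by
  induction h : Nat.card (contract P G₀).ConnectedComponent using Nat.strong_induction_on
    generalizing G₀ with
  | _ k ih =>
  by_cases hconn : (contract P G₀).Connected
  · exact ⟨G₀, fun _ => rfl, hconn⟩
  have hcard : Nat.card β ≤ Nat.card G₀.edgeSet + 1 := by
    rw [sum_ncard_neighborSet] at hsum
    omega
  have hblock' : ∀ p, ∃ x y, P x = p ∧ G₀.Adj x y := fun p => by
    obtain ⟨x, rfl, hx⟩ := hblock p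
    obtain ⟨y, hy⟩ := Set.nonempty_of_ncard_ne_zero hx
    exact ⟨x, y, rfl, hy⟩
  obtain ⟨G₁, hG₁, hlt⟩ :=
    exists_ncard_neighborSet_eq_card_connectedComponent_contract_lt hcard hconn hblock'
  obtain ⟨G, hG, hGconn⟩ := ih _ (h ▸ hlt) G₁ (by simpa only [hG₁] using hsum)
    (by simpa only [hG₁] using hblock) rfl
  exact ⟨G, fun v => (hG v).trans (hG₁ v), hGconn⟩

end swapStep

end SimpleGraph

theorem stmt19_general {n N : ℕ} (hN : 0 < N) (d : Fin n → ℕ) (hgr : Graphical d)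
    (P : Fin n → Fin N)
    (D : Fin N → ℕ)
    (hD : ∀ b, D b = ∑ v ∈ Finset.univ.filter (fun v => P v = b), d v)
    (hpos : N = 1 ∨ ∀ b, D b ≠ 0)
    (hsum : 2 * (N - 1) ≤ ∑ b, D b) :
    ∃ G : SimpleGraph (Fin n),
      (∀ v, (G.neighborSet v).ncard = d v) ∧
      (SimpleGraph.fromRel
        (fun b c => ∃ u v : Fin n, P u = b ∧ P v = c ∧ G.Adj u v)).Connected := by
  have : Nonempty (Fin N) := ⟨⟨0, hN⟩⟩
  simp only [SimpleGraph.fromRel_eq_contract]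
  obtain ⟨G₀, hG₀⟩ := hgr
  rcases hpos with rfl | hpos
  · exact ⟨G₀, hG₀, .of_subsingleton⟩
  obtain ⟨G, hG, hconn⟩ := SimpleGraph.exists_ncard_neighborSet_eq_connected_contract G₀
    (calc 2 * (Nat.card (Fin N) - 1) ≤ ∑ b, D b := by rwa [Nat.card_fin]
      _ = ∑ v, d v := by simp only [hD]; exact Finset.sum_fiberwise _ P d
      _ = ∑ v, (G₀.neighborSet v).ncard := by simp only [hG₀])
    fun b => by
      obtain ⟨x, hx, hdx⟩ := Finset.exists_ne_zero_of_sum_ne_zero (hD b ▸ hpos b)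
      exact ⟨x, (Finset.mem_filter.mp hx).2, hG₀ x ▸ hdx⟩
  exact ⟨G, fun v => (hG v).trans (hG₀ v), hconn⟩

/-- Supernode potential connectedness: let `d` be a graphical degree sequence and
let the vertices be partitioned into `N` blocks (supernodes) by the surjection
`P`, with block degree sums `D`. If `N = 1` or all `D b ≥ 1`, and half the total
degree sum is at least `N - 1`, then some simple realization of `d` has connected
block-contraction (between any two blocks there is a path). -/
theorem stmt19 {n N : ℕ} (hN : 0 < N) (d : Fin n → ℕ) (hgr : Graphical d)
    (P : Fin n → Fin N) (hsurj : Function.Surjective P)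
    (D : Fin N → ℕ)
    (hD : ∀ b, D b = ∑ v ∈ Finset.univ.filter (fun v => P v = b), d v)
    (hpos : N = 1 ∨ ∀ b, D b ≠ 0)
    (hsum : 2 * (N - 1) ≤ ∑ b, D b) :
    ∃ G : SimpleGraph (Fin n),
      (∀ v, (G.neighborSet v).ncard = d v) ∧
      (SimpleGraph.fromRel
        (fun b c => ∃ u v : Fin n, P u = b ∧ P v = c ∧ G.Adj u v)).Connected :=
  stmt19_general hN d hgr P D hD hpos hsum
end
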